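/- The Pareto front of the OneJumpZeroJump_SS problem equals the set {(c, n + 2k − c) : c ∈ ℤ, 2k ≤ c ≤ n} ∪ {(k, n + k), (n + k, k)} ∪ {(2k + 1/n, n − 1/n), (n − 1/n, 2k + 1/n)} ⊆ ℝ², and this set has exactly n − 2k + 5 elements. -/

import Mathlib

/-!
Both objectives depend only on the number `m` of ones: `f(x) = (h m, h (n - m))` for a single
profile `h`. A case split on `m` shows that `f(x)` is either one of the listed points, all of which
lie on the line `f₁ + f₂ = n + 2k`, or lies strictly below `f(1ⁿ) = (n + k, k)` or
`f(0ⁿ) = (k, n + k)`. Hence `f₁ + f₂ ≤ n + 2k` everywhere, and the Pareto optimal vectors are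
exactly the listed points. These have pairwise distinct first coordinates: the integers
`2k, …, n`, the integers `k < 2k` and `n + k > n`, and the non-integers `2k + 1/n` and `n - 1/n`.
-/

open Finset

/-- Number of 1-bits of a bit string `x ∈ {0,1}^n`. -/
def onesCount {n : ℕ} (x : Fin n → Bool) : ℕ :=
  (Finset.univ.filter fun i => x i = true).card

/-- First objective of the OneJumpZeroJump_SS problem with parameters `k`, `a`. -/
noncomputable def ojzjssF1 (n k a : ℕ) (x : Fin n → Bool) : ℝ :=
  if onesCount x = k - a then 2 * (k : ℝ) + 1 / (n : ℝ)
  else if onesCount x = n - (k - a) then (n : ℝ) - 1 / (n : ℝ)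
  else if onesCount x ≤ n - k ∨ x = fun _ => true then (k : ℝ) + onesCount x
  else (n : ℝ) - onesCount x

/-- Second objective of the OneJumpZeroJump_SS problem: `f₂(x) = f₁(x̄)`. -/
noncomputable def ojzjssF2 (n k a : ℕ) (x : Fin n → Bool) : ℝ :=
  ojzjssF1 n k a fun i => !(x i)

/-- `u` dominates `v` (for maximization of both coordinates). -/
def dominates (u v : ℝ × ℝ) : Prop := v.1 ≤ u.1 ∧ v.2 ≤ u.2 ∧ u ≠ v

/-- `x` is Pareto optimal for OneJumpZeroJump_SS. -/
def ojzjssParetoOptimal (n k a : ℕ) (x : Fin n → Bool) : Prop :=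
  ∀ y : Fin n → Bool,
    ¬ dominates (ojzjssF1 n k a y, ojzjssF2 n k a y) (ojzjssF1 n k a x, ojzjssF2 n k a x)

/-- The Pareto front of OneJumpZeroJump_SS: objective vectors of Pareto optimal solutions. -/
def ojzjssParetoFront (n k a : ℕ) : Set (ℝ × ℝ) :=
  {p | ∃ x : Fin n → Bool,
    ojzjssParetoOptimal n k a x ∧ (ojzjssF1 n k a x, ojzjssF2 n k a x) = p}

/-- The claimed description of the Pareto front of OneJumpZeroJump_SS:
`{(c, n+2k−c) : c ∈ ℤ, 2k ≤ c ≤ n} ∪ {(k, n+k), (n+k, k)} ∪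
{(2k + 1/n, n − 1/n), (n − 1/n, 2k + 1/n)}`. -/
def ojzjssFrontSet (n k : ℕ) : Set (ℝ × ℝ) :=
  {p | ∃ c : ℤ, 2 * (k : ℤ) ≤ c ∧ c ≤ (n : ℤ) ∧ p = ((c : ℝ), (n : ℝ) + 2 * k - c)} ∪
    {((k : ℝ), (n : ℝ) + k), ((n : ℝ) + k, (k : ℝ))} ∪
    {(2 * (k : ℝ) + 1 / (n : ℝ), (n : ℝ) - 1 / (n : ℝ)),
      ((n : ℝ) - 1 / (n : ℝ), 2 * (k : ℝ) + 1 / (n : ℝ))}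

lemma dominates_iff_lt {u v : ℝ × ℝ} : dominates u v ↔ v < u := by
  simp only [dominates, lt_iff_le_and_ne, Prod.le_def, ne_comm, and_assoc]

lemma Prod.fst_add_snd_lt_of_lt {α : Type*} [AddCommMonoid α] [PartialOrder α]
    [IsOrderedCancelAddMonoid α] {u v : α × α} (h : v < u) : v.1 + v.2 < u.1 + u.2 := by
  rcases Prod.lt_iff.1 h with ⟨h1, h2⟩ | ⟨h1, h2⟩
  · exact add_lt_add_of_lt_of_le h1 h2
  · exact add_lt_add_of_le_of_lt h1 h2

lemma Int.cast_ne_add_of_pos_of_lt_one {c j : ℤ} {t : ℝ} (ht0 : 0 < t) (ht1 : t < 1) :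
    (c : ℝ) ≠ j + t := by
  intro h
  have hjc : j < c := by exact_mod_cast (by linarith : (j : ℝ) < c)
  have hcj : c < j + 1 := by exact_mod_cast (by linarith : (c : ℝ) < j + 1)
  omega

section OnesCount
variable {n : ℕ}

lemma onesCount_le (x : Fin n → Bool) : onesCount x ≤ n :=
  (card_filter_le _ _).trans_eq (card_fin n)

lemma onesCount_not (x : Fin n → Bool) : onesCount (fun i => !(x i)) = n - onesCount x := by
  have h := card_filter_add_card_filter_not (s := univ) fun i => x i = true
  simp only [card_univ, Fintype.card_fin, Bool.not_eq_true] at h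
  simp only [onesCount, Bool.not_eq_eq_eq_not, Bool.not_true]
  omega

lemma onesCount_eq_iff_eq_true (x : Fin n → Bool) : onesCount x = n ↔ x = fun _ => true := by
  calc onesCount x = n ↔ #{i | x i = true} = #(univ : Finset (Fin n)) := by rw [card_fin]; rfl
    _ ↔ x = fun _ => true := by rw [card_filter_eq_iff]; simp [funext_iff]

lemma exists_onesCount_eq {m : ℕ} (hm : m ≤ n) : ∃ x : Fin n → Bool, onesCount x = m :=
  ⟨fun i => decide ((i : ℕ) < m), by simp [onesCount, Fin.card_filter_val_lt, hm]⟩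

end OnesCount

lemma fst_add_snd_of_mem_ojzjssFrontSet {n k : ℕ} {p : ℝ × ℝ} (hp : p ∈ ojzjssFrontSet n k) :
    p.1 + p.2 = n + 2 * k := by
  simp only [ojzjssFrontSet, Set.mem_union, Set.mem_ofPred_eq, Set.mem_insert_iff,
    Set.mem_singleton_iff] at hp
  rcases hp with (⟨c, -, -, rfl⟩ | rfl | rfl) | rfl | rfl <;> ring

lemma ncard_segment_union_offset_points {n k : ℕ} {t : ℝ} (hk : 0 < k) (hkn : 2 * k < n)
    (ht0 : 0 < t) (ht : 2 * t < 1) :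
    ({p | ∃ c : ℤ, 2 * (k : ℤ) ≤ c ∧ c ≤ (n : ℤ) ∧ p = ((c : ℝ), (n : ℝ) + 2 * k - c)} ∪
      {((k : ℝ), (n : ℝ) + k), ((n : ℝ) + k, (k : ℝ))} ∪
      {(2 * (k : ℝ) + t, (n : ℝ) - t), ((n : ℝ) - t, 2 * (k : ℝ) + t)}).ncard = n - 2 * k + 5 := by
  set S := (fun c : ℤ => ((c : ℝ), (n : ℝ) + 2 * k - c)) '' Set.Icc (2 * (k : ℤ)) n
  have hseg : {p : ℝ × ℝ | ∃ c : ℤ, 2 * (k : ℤ) ≤ c ∧ c ≤ (n : ℤ) ∧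
      p = ((c : ℝ), (n : ℝ) + 2 * k - c)} = S := by
    ext p
    simp only [S, Set.mem_ofPred_eq, Set.mem_image, Set.mem_Icc, and_assoc, eq_comm]
  have hS_ncard : S.ncard = n - 2 * k + 1 := by
    rw [Set.ncard_image_of_injective _ fun c d h => Int.cast_injective (congrArg Prod.fst h),
      ← Finset.coe_Icc, Set.ncard_coe_finset, Int.card_Icc]
    omega
  have hfst : ∀ x y : ℝ, (x, y) ∈ S → ∃ c : ℤ, 2 * (k : ℤ) ≤ c ∧ c ≤ n ∧ x = c := by
    rintro x y ⟨c, ⟨h1, h2⟩, h⟩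
    exact ⟨c, h1, h2, (Prod.mk.inj h).1.symm⟩
  have hkn' : (2 * k + 1 : ℝ) ≤ n := by exact_mod_cast (by omega : 2 * k + 1 ≤ n)
  have hk' : (1 : ℝ) ≤ k := by exact_mod_cast hk
  rw [hseg]
  simp only [Set.union_insert, Set.union_singleton]
  rw [Set.ncard_insert_of_notMem, Set.ncard_insert_of_notMem, Set.ncard_insert_of_notMem,
    Set.ncard_insert_of_notMem, hS_ncard]
  · intro h
    obtain ⟨c, -, hcn, hc⟩ := hfst _ _ h
    have : (n + k : ℤ) = c := by exact_mod_cast hc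
    omega
  · rintro (h | h)
    · linarith [(Prod.mk.inj h).1]
    · obtain ⟨c, hkc, -, hc⟩ := hfst _ _ h
      have : (k : ℤ) = c := by exact_mod_cast hc
      omega
  · rintro (h | h | h)
    · linarith [(Prod.mk.inj h).1]
    · linarith [(Prod.mk.inj h).1]
    · obtain ⟨c, -, -, hc⟩ := hfst _ _ h
      exact Int.cast_ne_add_of_pos_of_lt_one (j := n - 1) (t := 1 - t) (by linarith)
        (by linarith) (by push_cast; linarith)
  · rintro (h | h | h | h)
    · linarith [(Prod.mk.inj h).1]
    · linarith [(Prod.mk.inj h).1]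
    · linarith [(Prod.mk.inj h).1]
    · obtain ⟨c, -, -, hc⟩ := hfst _ _ h
      exact Int.cast_ne_add_of_pos_of_lt_one (j := 2 * k) ht0 (by linarith)
        (by push_cast; linarith)

lemma ojzjssFrontSet_ncard {n k : ℕ} (hk : 0 < k) (hkn : 2 * k < n) :
    (ojzjssFrontSet n k).ncard = n - 2 * k + 5 := by
  have hn : (2 : ℝ) < n := by exact_mod_cast (by omega : 2 < n)
  refine ncard_segment_union_offset_points hk hkn (one_div_pos.2 (by linarith)) ?_
  rw [mul_one_div, div_lt_one (by linarith)]
  exact hn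

noncomputable def ojzjssProfile (n k a m : ℕ) : ℝ :=
  if m = k - a then 2 * (k : ℝ) + 1 / (n : ℝ)
  else if m = n - (k - a) then (n : ℝ) - 1 / (n : ℝ)
  else if m ≤ n - k ∨ m = n then (k : ℝ) + m
  else (n : ℝ) - m

noncomputable def ojzjssValue (n k a m : ℕ) : ℝ × ℝ :=
  (ojzjssProfile n k a m, ojzjssProfile n k a (n - m))

section Value
variable {n k a m : ℕ}

lemma ojzjss_objective_eq_value (x : Fin n → Bool) :
    (ojzjssF1 n k a x, ojzjssF2 n k a x) = ojzjssValue n k a (onesCount x) := by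
  simp only [ojzjssF2, ojzjssF1, ojzjssValue, ojzjssProfile, onesCount_not,
    ← onesCount_eq_iff_eq_true]

lemma ojzjssValue_zero (hak : a < k) (hkn : k < n) :
    ojzjssValue n k a 0 = ((k : ℝ), (n : ℝ) + k) := by
  unfold ojzjssValue ojzjssProfile
  split_ifs <;> first | omega | simp [add_comm]

lemma ojzjssValue_self (hak : a < k) (hkn : k < n) :
    ojzjssValue n k a n = ((n : ℝ) + k, (k : ℝ)) := by
  unfold ojzjssValue ojzjssProfile
  split_ifs <;> first | omega | simp [add_comm]

lemma ojzjssValue_k_sub (hkn : 2 * k < n) :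
    ojzjssValue n k a (k - a) = (2 * (k : ℝ) + 1 / n, (n : ℝ) - 1 / n) := by
  unfold ojzjssValue ojzjssProfile
  split_ifs <;> first | omega | rfl

lemma ojzjssValue_n_sub (hkn : 2 * k < n) :
    ojzjssValue n k a (n - (k - a)) = ((n : ℝ) - 1 / n, 2 * (k : ℝ) + 1 / n) := by
  unfold ojzjssValue ojzjssProfile
  split_ifs <;> first | omega | rfl

lemma ojzjssValue_of_le_of_le (ha : 0 < a) (hak : a < k) (hkm : k ≤ m) (hmk : m ≤ n - k) :
    ojzjssValue n k a m = ((k : ℝ) + m, (n : ℝ) + k - m) := by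
  unfold ojzjssValue ojzjssProfile
  split_ifs <;> first | omega | (ext <;> push_cast [Nat.cast_sub (show m ≤ n by omega)] <;> ring)

lemma ojzjssValue_of_pos_of_lt (hkn : 2 * k < n) (hm : 0 < m) (hmk : m < k) (hma : m ≠ k - a) :
    ojzjssValue n k a m = ((k : ℝ) + m, (m : ℝ)) := by
  unfold ojzjssValue ojzjssProfile
  split_ifs <;> first | omega | (ext <;> push_cast [Nat.cast_sub (show m ≤ n by omega)] <;> ring)

lemma ojzjssValue_of_lt_of_lt (hkn : 2 * k < n) (hm : n - k < m) (hmn : m < n)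
    (hma : m ≠ n - (k - a)) : ojzjssValue n k a m = ((n : ℝ) - m, (n : ℝ) + k - m) := by
  unfold ojzjssValue ojzjssProfile
  split_ifs <;> first | omega | (ext <;> push_cast [Nat.cast_sub (show m ≤ n by omega)] <;> ring)

lemma ojzjssValue_mem_frontSet_or_lt (ha : 0 < a) (hak : a < k) (hkn : 2 * k < n)
    (hmn : m ≤ n) :
    ojzjssValue n k a m ∈ ojzjssFrontSet n k ∨
      ojzjssValue n k a m < ((n : ℝ) + k, (k : ℝ)) ∨
      ojzjssValue n k a m < ((k : ℝ), (n : ℝ) + k) := by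
  have hregion : m = 0 ∨ m = n ∨ m = k - a ∨ m = n - (k - a) ∨ (k ≤ m ∧ m ≤ n - k) ∨
      (0 < m ∧ m < k ∧ m ≠ k - a) ∨ (n - k < m ∧ m < n ∧ m ≠ n - (k - a)) := by
    omega
  simp only [ojzjssFrontSet, Set.mem_union, Set.mem_ofPred_eq, Set.mem_insert_iff,
    Set.mem_singleton_iff]
  rcases hregion with h | h | h | h | ⟨hkm, hmk⟩ | ⟨hm, hmk, hma⟩ | ⟨hm, hmn, hma⟩
  · simp [h, ojzjssValue_zero (n := n) hak (by omega)]
  · simp [h, ojzjssValue_self (n := n) hak (by omega)]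
  · simp [h, ojzjssValue_k_sub (a := a) hkn]
  · simp [h, ojzjssValue_n_sub (a := a) hkn]
  · refine Or.inl (Or.inl (Or.inl ⟨k + m, by omega, by omega, ?_⟩))
    rw [ojzjssValue_of_le_of_le ha hak hkm hmk]
    ext <;> push_cast <;> ring
  · refine Or.inr (Or.inl ?_)
    rw [ojzjssValue_of_pos_of_lt hkn hm hmk hma]
    have hmn' : (m : ℝ) < n := by exact_mod_cast (by omega : m < n)
    exact Prod.mk_lt_mk_of_lt_of_le (by linarith) (by exact_mod_cast hmk.le)
  · refine Or.inr (Or.inr ?_)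
    rw [ojzjssValue_of_lt_of_lt hkn hm hmn hma]
    have hnkm : (n : ℝ) < k + m := by exact_mod_cast (by omega : n < k + m)
    exact Prod.mk_lt_mk_of_lt_of_le (by linarith) (by linarith [m.cast_nonneg (α := ℝ)])

lemma ojzjssValue_fst_add_snd_le (ha : 0 < a) (hak : a < k) (hkn : 2 * k < n) (hmn : m ≤ n) :
    (ojzjssValue n k a m).1 + (ojzjssValue n k a m).2 ≤ n + 2 * k := by
  rcases ojzjssValue_mem_frontSet_or_lt ha hak hkn hmn with h | h | h
  · exact (fst_add_snd_of_mem_ojzjssFrontSet h).le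
  · linarith [Prod.fst_add_snd_lt_of_lt h]
  · linarith [Prod.fst_add_snd_lt_of_lt h]

lemma exists_ojzjssValue_eq_of_mem_frontSet (ha : 0 < a) (hak : a < k) (hkn : 2 * k < n)
    {p : ℝ × ℝ} (hp : p ∈ ojzjssFrontSet n k) : ∃ m ≤ n, ojzjssValue n k a m = p := by
  simp only [ojzjssFrontSet, Set.mem_union, Set.mem_ofPred_eq, Set.mem_insert_iff,
    Set.mem_singleton_iff] at hp
  rcases hp with (⟨c, hkc, hcn, rfl⟩ | rfl | rfl) | rfl | rfl
  · refine ⟨(c - k).toNat, by omega, ?_⟩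
    rw [ojzjssValue_of_le_of_le ha hak (by omega) (by omega)]
    have hm : ((c - k).toNat : ℝ) = c - k := by exact_mod_cast Int.toNat_of_nonneg (by omega)
    ext <;> simp only [hm] <;> ring
  · exact ⟨0, by omega, ojzjssValue_zero hak (by omega)⟩
  · exact ⟨n, le_rfl, ojzjssValue_self hak (by omega)⟩
  · exact ⟨k - a, by omega, ojzjssValue_k_sub hkn⟩
  · exact ⟨n - (k - a), by omega, ojzjssValue_n_sub hkn⟩

end Value

section Pareto
variable {n k a : ℕ}

lemma ojzjssParetoOptimal_iff_mem_frontSet (ha : 0 < a) (hak : a < k) (hkn : 2 * k < n)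
    (x : Fin n → Bool) :
    ojzjssParetoOptimal n k a x ↔ (ojzjssF1 n k a x, ojzjssF2 n k a x) ∈ ojzjssFrontSet n k := by
  simp only [ojzjssParetoOptimal, ojzjss_objective_eq_value, dominates_iff_lt]
  constructor
  · intro hopt
    rcases ojzjssValue_mem_frontSet_or_lt ha hak hkn (onesCount_le x) with h | h | h
    · exact h
    · refine absurd ?_ (hopt fun _ => true)
      rwa [(onesCount_eq_iff_eq_true _).2 rfl, ojzjssValue_self hak (by omega)]
    · refine absurd ?_ (hopt fun _ => false)
      rwa [show onesCount (fun _ : Fin n => false) = 0 by simp [onesCount],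
        ojzjssValue_zero hak (by omega)]
  · intro hx y hlt
    linarith [Prod.fst_add_snd_lt_of_lt hlt, fst_add_snd_of_mem_ojzjssFrontSet hx,
      ojzjssValue_fst_add_snd_le ha hak hkn (onesCount_le y)]

lemma ojzjssParetoFront_eq (ha : 0 < a) (hak : a < k) (hkn : 2 * k < n) :
    ojzjssParetoFront n k a = ojzjssFrontSet n k := by
  ext p
  constructor
  · rintro ⟨x, hx, rfl⟩
    exact (ojzjssParetoOptimal_iff_mem_frontSet ha hak hkn x).1 hx
  · intro hp
    obtain ⟨m, hmn, rfl⟩ := exists_ojzjssValue_eq_of_mem_frontSet ha hak hkn hp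
    obtain ⟨x, rfl⟩ := exists_onesCount_eq hmn
    refine ⟨x, ?_, ojzjss_objective_eq_value x⟩
    rwa [ojzjssParetoOptimal_iff_mem_frontSet ha hak hkn, ojzjss_objective_eq_value]

end Pareto

theorem ojzjss_pareto_front_general (n k a : ℕ) (hkn : 2 * k < n)
    (ha : 2 ≤ a) (hak : a < k) :
    ojzjssParetoFront n k a = ojzjssFrontSet n k ∧
      (ojzjssFrontSet n k).ncard = n - 2 * k + 5 :=
  ⟨ojzjssParetoFront_eq (by omega) hak hkn, ojzjssFrontSet_ncard (by omega) hkn⟩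

/-- The Pareto front of the OneJumpZeroJump_SS problem (with `3 ≤ k < n/2`, `2 ≤ a < k`)
equals `{(c, n+2k−c) : c ∈ ℤ, 2k ≤ c ≤ n} ∪ {(k, n+k), (n+k, k)} ∪
{(2k + 1/n, n − 1/n), (n − 1/n, 2k + 1/n)}`, and this set has exactly `n − 2k + 5`
elements. -/
theorem ojzjss_pareto_front (n k a : ℕ) (hk : 3 ≤ k) (hkn : 2 * k < n)
    (ha : 2 ≤ a) (hak : a < k) :
    ojzjssParetoFront n k a = ojzjssFrontSet n k ∧
      (ojzjssFrontSet n k).ncard = n - 2 * k + 5 :=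
  ojzjss_pareto_front_general n k a hkn ha hak
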